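/- Any two nonempty connected acyclic simple graphs in which every vertex has countably infinite degree are isomorphic as graphs. -/

import Mathlib

/-!
Root a tree `G` at a vertex `r`. Every vertex `v` has a parent, the next vertex on the path from
`v` to `r`, and its other neighbours are its children; if every vertex has countably infinitely
many neighbours, each set of children can be enumerated by `ℕ`. Following these enumerations
from `r` names every vertex by a finite list of naturals, and this naming is an isomorphism from
the tree of lists in which the children of `l` are the lists `a :: l`: uniqueness of paths in an
acyclic graph makes it injective and identifies the parent of the `a`-th child of `v` with `v`,
and connectedness makes it surjective.
-/

namespace SimpleGraph

variable {V α : Type*} {G : SimpleGraph V} {r u v w : V}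

def listTree (α : Type*) : SimpleGraph (List α) :=
  fromRel fun l l' => ∃ a, l' = a :: l

theorem listTree_adj {l l' : List α} :
    (listTree α).Adj l l' ↔ (∃ a, l' = a :: l) ∨ ∃ a, l = a :: l' := by
  refine ⟨fun h => h.2, fun h => ⟨?_, h⟩⟩
  rintro rfl
  obtain ⟨a, h⟩ | ⟨a, h⟩ := h <;> exact List.cons_ne_self a l h.symm

theorem Reachable.mem_of_forall_adj_mem {s : Set V} (hs : ∀ v ∈ s, ∀ w, G.Adj v w → w ∈ s)
    (huv : G.Reachable u v) (hu : u ∈ s) : v ∈ s := by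
  obtain ⟨p⟩ := huv
  induction p with
  | nil => exact hu
  | cons hadj _ ih => exact ih (hs _ hu _ hadj)

open scoped Classical in
/-- The second vertex of a path from `v` to `r` (`v` itself if there is none). -/
noncomputable def parent (G : SimpleGraph V) (r v : V) : V :=
  if h : G.Reachable v r then h.exists_isPath.choose.snd else v

def children (G : SimpleGraph V) (r v : V) : Set V :=
  G.neighborSet v \ {G.parent r v}

theorem parent_self (r : V) : G.parent r r = r := by
  rw [parent, dif_pos .rfl]
  have hnil := Walk.isPath_iff_nil.mp (Reachable.rfl (G := G) (u := r)).exists_isPath.choose_spec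
  exact Walk.getVert_of_length_le _ (Walk.length_eq_zero_iff.mpr hnil ▸ zero_le_one)

theorem IsAcyclic.parent_eq_snd (hG : G.IsAcyclic) {p : G.Walk v r} (hp : p.IsPath) :
    G.parent r v = p.snd := by
  rw [parent, dif_pos p.reachable, Subtype.mk.inj <|
    (hG.subsingleton_path v r).elim ⟨_, p.reachable.exists_isPath.choose_spec⟩ ⟨p, hp⟩]

theorem IsAcyclic.parent_eq_of_mem_children (hG : G.IsAcyclic) (hv : G.Reachable v r)
    (hw : w ∈ G.children r v) : G.parent r w = v := by
  obtain ⟨p, hp⟩ := hv.exists_isPath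
  obtain ⟨hvw, hw⟩ := hw
  rw [Set.mem_singleton_iff, hG.parent_eq_snd hp] at hw
  have hwp : w ∉ p.support := fun hmem => hw (hG.eq_snd_of_adj_start hp hvw hmem)
  rw [hG.parent_eq_snd (hp.cons hwp (h := G.adj_symm hvw)), Walk.snd_cons]

section listTreeMap

variable (r) (e : ∀ v, α ≃ G.children r v)

def listTreeMap : List α → V
  | [] => r
  | a :: l => e (listTreeMap l) a

variable {r e} (hG : G.IsAcyclic) (hconn : G.Preconnected)
include hG hconn

theorem parent_listTreeMap (l : List α) :
    G.parent r (listTreeMap r e l) = listTreeMap r e l.tail := by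
  cases l with
  | nil => exact parent_self r
  | cons a l => exact hG.parent_eq_of_mem_children (hconn _ _) (e _ a).2

theorem listTreeMap_cons_ne_root (a : α) (l : List α) : listTreeMap r e (a :: l) ≠ r := by
  intro h
  have hl := parent_listTreeMap (e := e) hG hconn (a :: l)
  rw [h, parent_self, List.tail_cons] at hl
  have hadj : G.Adj (listTreeMap r e l) (listTreeMap r e (a :: l)) := (e _ a).2.1
  rw [h, ← hl] at hadj
  exact hadj.ne rfl

theorem listTreeMap_injective : Function.Injective (listTreeMap r e) := by
  intro l l' h
  induction l generalizing l' with
  | nil =>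
    cases l' with
    | nil => rfl
    | cons a' l' => exact absurd h.symm (listTreeMap_cons_ne_root hG hconn a' l')
  | cons a l ih =>
    cases l' with
    | nil => exact absurd h (listTreeMap_cons_ne_root hG hconn a l)
    | cons a' l' =>
      have hl : listTreeMap r e l = listTreeMap r e l' := by
        simpa only [parent_listTreeMap hG hconn, List.tail_cons] using congrArg (G.parent r) h
      obtain rfl := ih hl
      rw [(e _).injective (Subtype.ext h)]

theorem eq_listTreeMap_of_adj {l : List α} (hadj : G.Adj (listTreeMap r e l) w) :
    w = listTreeMap r e l.tail ∨ ∃ a, listTreeMap r e (a :: l) = w := by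
  by_cases hw : w = G.parent r (listTreeMap r e l)
  · exact .inl (hw.trans (parent_listTreeMap hG hconn l))
  · exact .inr ⟨(e _).symm ⟨w, hadj, hw⟩, by simp [listTreeMap]⟩

theorem adj_listTreeMap_iff {l l' : List α} :
    G.Adj (listTreeMap r e l) (listTreeMap r e l') ↔ (listTree α).Adj l l' := by
  refine ⟨fun hadj => ?_, ?_⟩
  · rw [listTree_adj]
    obtain h | ⟨a, h⟩ := eq_listTreeMap_of_adj hG hconn hadj
    · obtain rfl := listTreeMap_injective hG hconn h
      cases l with
      | nil => exact absurd rfl hadj.ne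
      | cons a l => exact .inr ⟨a, rfl⟩
    · exact .inl ⟨a, (listTreeMap_injective hG hconn h).symm⟩
  · rw [listTree_adj]
    rintro (⟨a, rfl⟩ | ⟨a, rfl⟩)
    · exact (e _ a).2.1
    · exact G.adj_symm (e _ a).2.1

theorem listTreeMap_surjective : Function.Surjective (listTreeMap r e) := by
  refine fun v =>
    (hconn r v).mem_of_forall_adj_mem (s := Set.range (listTreeMap r e)) ?_ ⟨[], rfl⟩
  rintro _ ⟨l, rfl⟩ w hadj
  obtain rfl | ⟨a, rfl⟩ := eq_listTreeMap_of_adj hG hconn hadj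
  exacts [⟨_, rfl⟩, ⟨_, rfl⟩]

variable (r e) in
noncomputable def listTreeIso : listTree α ≃g G where
  toEquiv := .ofBijective (listTreeMap r e)
    ⟨listTreeMap_injective hG hconn, listTreeMap_surjective hG hconn⟩
  map_rel_iff' := adj_listTreeMap_iff hG hconn

end listTreeMap

theorem IsAcyclic.nonempty_iso_listTree_nat (hG : G.IsAcyclic) (hconn : G.Connected)
    (hdeg : ∀ v, Countable (G.neighborSet v) ∧ Infinite (G.neighborSet v)) :
    Nonempty (listTree ℕ ≃g G) := by
  obtain ⟨r⟩ := hconn.nonempty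
  have e (v : V) : Nonempty (ℕ ≃ G.children r v) := by
    obtain ⟨hcount, hinf⟩ := hdeg v
    have : Countable (G.children r v) :=
      (Set.countable_coe_iff.mp hcount |>.mono Set.sdiff_subset).to_subtype
    have : Infinite (G.children r v) :=
      (Set.infinite_coe_iff.mp hinf |>.sdiff (Set.finite_singleton _)).to_subtype
    exact nonempty_equiv_of_countable
  exact ⟨listTreeIso r (fun v => (e v).some) hG hconn.preconnected⟩

end SimpleGraph

theorem trees_countably_branching_isomorphic_general {V V' : Type*}
    (G : SimpleGraph V) (G' : SimpleGraph V')
    (hconn : G.Connected) (hacyc : G.IsAcyclic)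
    (hdeg : ∀ v : V, Countable (G.neighborSet v) ∧ Infinite (G.neighborSet v))
    (hconn' : G'.Connected) (hacyc' : G'.IsAcyclic)
    (hdeg' : ∀ v : V', Countable (G'.neighborSet v) ∧ Infinite (G'.neighborSet v)) :
    Nonempty (G ≃g G') := by
  obtain ⟨i⟩ := hacyc.nonempty_iso_listTree_nat hconn hdeg
  obtain ⟨i'⟩ := hacyc'.nonempty_iso_listTree_nat hconn' hdeg'
  exact ⟨i.symm.trans i'⟩

/-- Any two nonempty connected acyclic simple graphs in which every vertex has
countably infinite degree are isomorphic. -/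
theorem trees_countably_branching_isomorphic {V V' : Type*}
    (G : SimpleGraph V) (G' : SimpleGraph V') [Nonempty V] [Nonempty V']
    (hconn : G.Connected) (hacyc : G.IsAcyclic)
    (hdeg : ∀ v : V, Countable (G.neighborSet v) ∧ Infinite (G.neighborSet v))
    (hconn' : G'.Connected) (hacyc' : G'.IsAcyclic)
    (hdeg' : ∀ v : V', Countable (G'.neighborSet v) ∧ Infinite (G'.neighborSet v)) :
    Nonempty (G ≃g G') :=
  trees_countably_branching_isomorphic_general G G' hconn hacyc hdeg hconn' hacyc' hdeg'
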